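/- arXiv:2312.09405 — 5 statements merged into one kernel-verified Lean document; each statement's English description precedes it below -/
import Mathlib

section
/- If (u, λ) is a generalized eigenpair of (M, Q) with Q the block-diagonal matrix Q = diag(M_SS, M_ScSc) (blocks of M on the partition S, Sc), then (J u, 2−λ) is also a generalized eigenpair of (M, Q), where J is the diagonal matrix with J_ii = 1 for i ∈ S and J_ii = −1 for i ∈ Sc. -/
open Matrix

def Jmat (s t : ℕ) : Matrix (Fin s ⊕ Fin t) (Fin s ⊕ Fin t) ℝ :=
  Matrix.fromBlocks 1 0 0 (-1)

def Qmat {s t : ℕ} (M : Matrix (Fin s ⊕ Fin t) (Fin s ⊕ Fin t) ℝ) :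
    Matrix (Fin s ⊕ Fin t) (Fin s ⊕ Fin t) ℝ :=
  Matrix.fromBlocks M.toBlocks₁₁ 0 0 M.toBlocks₂₂

lemma MJ_gen {s t : ℕ} (A : Matrix (Fin s) (Fin s) ℝ) (B : Matrix (Fin s) (Fin t) ℝ)
    (C : Matrix (Fin t) (Fin s) ℝ) (D : Matrix (Fin t) (Fin t) ℝ) :
    Matrix.fromBlocks A B C D * Jmat s t =
      Jmat s t * ((2 : ℝ) • Matrix.fromBlocks A 0 0 D - Matrix.fromBlocks A B C D) := by
  rw [Matrix.fromBlocks_smul, sub_eq_add_neg, Matrix.fromBlocks_neg,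
    Matrix.fromBlocks_add, Jmat, Matrix.fromBlocks_multiply,
    Matrix.fromBlocks_multiply]
  simp
  constructor <;> module

lemma MJ_eq {s t : ℕ} (M : Matrix (Fin s ⊕ Fin t) (Fin s ⊕ Fin t) ℝ) :
    M * Jmat s t = Jmat s t * ((2 : ℝ) • Qmat M - M) := by
  have := MJ_gen M.toBlocks₁₁ M.toBlocks₁₂ M.toBlocks₂₁ M.toBlocks₂₂
  rw [Matrix.fromBlocks_toBlocks] at this
  rw [Qmat]
  exact this

lemma JQ_eq {s t : ℕ} (M : Matrix (Fin s ⊕ Fin t) (Fin s ⊕ Fin t) ℝ) :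
    Jmat s t * Qmat M = Qmat M * Jmat s t := by
  simp [Jmat, Qmat, Matrix.fromBlocks_multiply]

/-- Spectral folding (forward direction): if `(u, λ)` is a generalized eigenpair of
`(M, Q)` with `Q = diag(M_SS, M_ScSc)`, then `(J u, 2 − λ)` is also a generalized
eigenpair. -/
theorem stmt_2 {s t : ℕ} (M : Matrix (Fin s ⊕ Fin t) (Fin s ⊕ Fin t) ℝ)
    (hM : M.PosSemidef)
    (hSS : IsUnit M.toBlocks₁₁.det) (hScSc : IsUnit M.toBlocks₂₂.det)
    (u : Fin s ⊕ Fin t → ℝ) (lam : ℝ)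
    (heig : M *ᵥ u = lam • (Qmat M *ᵥ u)) :
    M *ᵥ (Jmat s t *ᵥ u) = (2 - lam) • (Qmat M *ᵥ (Jmat s t *ᵥ u)) := by
  calc M *ᵥ (Jmat s t *ᵥ u) = (M * Jmat s t) *ᵥ u := by rw [Matrix.mulVec_mulVec]
    _ = Jmat s t *ᵥ (((2 : ℝ) • Qmat M - M) *ᵥ u) := by
        rw [MJ_eq, ← Matrix.mulVec_mulVec]
    _ = Jmat s t *ᵥ ((2 - lam) • (Qmat M *ᵥ u)) := by
        rw [Matrix.sub_mulVec, Matrix.smul_mulVec, heig, sub_smul]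
    _ = (2 - lam) • ((Jmat s t * Qmat M) *ᵥ u) := by
        rw [Matrix.mulVec_smul, Matrix.mulVec_mulVec]
    _ = (2 - lam) • (Qmat M *ᵥ (Jmat s t *ᵥ u)) := by
        rw [JQ_eq, ← Matrix.mulVec_mulVec]
end

section
/- With Q = diag(M_SS, M_ScSc), the spectral folding property M u = λ Q u ⇒ M J u = (2−λ) Q J u implies that all generalized eigenvalues λ of (M, Q) satisfy 0 ≤ λ ≤ 2. -/
/-! A generalized eigenvalue of a positive semidefinite pencil `(M, Q)` with `Q` positive definite
is the Rayleigh quotient `uᵀMu / uᵀQu ≥ 0`. Folding turns the eigenpair `(u, λ)` into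
`(Ju, 2 - λ)`, and `Ju ≠ 0` since `J² = 1`, so `2 - λ ≥ 0` as well. -/

open Matrix

lemma Matrix.PosSemidef.nonneg_of_mulVec_eq_smul_mulVec {n : Type*} [Fintype n]
    {M Q : Matrix n n ℝ} (hM : M.PosSemidef) (hQ : Q.PosDef) {u : n → ℝ} (hu : u ≠ 0) {lam : ℝ}
    (h : M *ᵥ u = lam • (Q *ᵥ u)) : 0 ≤ lam := by
  have hMu : 0 ≤ u ⬝ᵥ (M *ᵥ u) := by simpa using hM.dotProduct_mulVec_nonneg u
  have hQu : 0 < u ⬝ᵥ (Q *ᵥ u) := by simpa using hQ.dotProduct_mulVec_pos hu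
  rw [h, dotProduct_smul, smul_eq_mul] at hMu
  exact nonneg_of_mul_nonneg_left hMu hQu

lemma Jmat_mul_self (s t : ℕ) : Jmat s t * Jmat s t = 1 := by
  simp [Jmat, fromBlocks_multiply, ← fromBlocks_one]

lemma Jmat_mulVec_ne_zero {s t : ℕ} {u : Fin s ⊕ Fin t → ℝ} (hu : u ≠ 0) :
    Jmat s t *ᵥ u ≠ 0 := by
  intro hJu
  apply hu
  simpa [mulVec_mulVec, Jmat_mul_self] using congrArg (Jmat s t *ᵥ ·) hJu

/-- With `Q = diag(M_SS, M_ScSc)` positive definite and the spectral folding property,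
all generalized eigenvalues `λ` of `(M, Q)` satisfy `0 ≤ λ ≤ 2`. -/
theorem stmt_4 {s t : ℕ} (M : Matrix (Fin s ⊕ Fin t) (Fin s ⊕ Fin t) ℝ)
    (hM : M.PosSemidef) (hQ : (Qmat M).PosDef)
    (hfold : ∀ (u : Fin s ⊕ Fin t → ℝ) (lam : ℝ),
      M *ᵥ u = lam • (Qmat M *ᵥ u) →
      M *ᵥ (Jmat s t *ᵥ u) = (2 - lam) • (Qmat M *ᵥ (Jmat s t *ᵥ u))) :
    ∀ (u : Fin s ⊕ Fin t → ℝ) (lam : ℝ), u ≠ 0 →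
      M *ᵥ u = lam • (Qmat M *ᵥ u) → 0 ≤ lam ∧ lam ≤ 2 := by
  intro u lam hu h
  have hfolded : 0 ≤ 2 - lam :=
    hM.nonneg_of_mulVec_eq_smul_mulVec hQ (Jmat_mulVec_ne_zero hu) (hfold u lam h)
  exact ⟨hM.nonneg_of_mulVec_eq_smul_mulVec hQ hu h, by linarith⟩
end

section
/- Energy equipartition for bandlimited signals (Proposition 1): under the same hypotheses ([U_R, J U_R]ᵀ Q [U_R, J U_R] = I with Q = diag(Q_S, Q_Sc)), every x in the column span of U_R satisfies ‖x_S‖_{Q_S}² = ‖x_Sc‖_{Q_Sc}² = (1/2)‖x‖_Q². -/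
/-!
The off-diagonal block of the Gram identity gives `U_Rᵀ Q J U_R = 0`, so `xᵀ Q J x = 0` for every
`x` in the column span of `U_R`. Since `Q` is block diagonal, `xᵀ Q J x = ‖x_S‖² - ‖x_Sc‖²` while
`xᵀ Q x = ‖x_S‖² + ‖x_Sc‖²`, and both equalities follow.
-/

open Matrix

namespace Matrix

variable {R m n n₁ n₂ : Type*} [CommRing R] [Fintype m] [Fintype n]

theorem transpose_mul_mul_eq_zero_of_fromCols_gram_eq_one [Fintype n₁] [Fintype n₂]
    [DecidableEq n₁] [DecidableEq n₂] {A : Matrix m n₁ R} {B : Matrix m n₂ R} {Q : Matrix m m R}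
    (h : (fromCols A B)ᵀ * Q * fromCols A B = 1) : Aᵀ * Q * B = 0 := by
  rw [transpose_fromCols, fromRows_mul, fromRows_mul_fromCols, ← fromBlocks_one] at h
  exact (fromBlocks_inj.mp h).2.1

theorem mulVec_dotProduct_mulVec_mulVec (A B : Matrix m n R) (M : Matrix m m R) (c : n → R) :
    A *ᵥ c ⬝ᵥ (M *ᵥ (B *ᵥ c)) = c ⬝ᵥ ((Aᵀ * M * B) *ᵥ c) := by
  rw [← mulVec_mulVec, ← mulVec_mulVec, dotProduct_mulVec c, vecMul_transpose]

theorem sumElim_dotProduct_fromBlocks_zero_mulVec_sumElim (A : Matrix m m R) (D : Matrix n n R)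
    (a a' : m → R) (b b' : n → R) :
    Sum.elim a b ⬝ᵥ (fromBlocks A 0 0 D *ᵥ Sum.elim a' b') = a ⬝ᵥ (A *ᵥ a') + b ⬝ᵥ (D *ᵥ b') := by
  simp [fromBlocks_mulVec, sumElim_dotProduct_sumElim]

end Matrix

theorem Jmat_mulVec_sumElim {s t : ℕ} (a : Fin s → ℝ) (b : Fin t → ℝ) :
    Jmat s t *ᵥ Sum.elim a b = Sum.elim a (-b) := by
  simp [Jmat, fromBlocks_mulVec, neg_mulVec]

theorem stmt_9_general {s t r : ℕ} (QS : Matrix (Fin s) (Fin s) ℝ) (QSc : Matrix (Fin t) (Fin t) ℝ)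
    (UR : Matrix (Fin s ⊕ Fin t) (Fin r) ℝ)
    (horth : (Matrix.fromCols UR (Jmat s t * UR))ᵀ * Matrix.fromBlocks QS 0 0 QSc *
        Matrix.fromCols UR (Jmat s t * UR) = 1) :
    ∀ x : Fin s ⊕ Fin t → ℝ, (∃ c : Fin r → ℝ, x = UR *ᵥ c) →
      (x ∘ Sum.inl) ⬝ᵥ (QS *ᵥ (x ∘ Sum.inl)) = (x ∘ Sum.inr) ⬝ᵥ (QSc *ᵥ (x ∘ Sum.inr)) ∧
      (x ∘ Sum.inl) ⬝ᵥ (QS *ᵥ (x ∘ Sum.inl)) =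
        (1 / 2) * (x ⬝ᵥ (Matrix.fromBlocks QS 0 0 QSc *ᵥ x)) := by
  rintro x ⟨c, rfl⟩
  have hcross : UR *ᵥ c ⬝ᵥ (fromBlocks QS 0 0 QSc *ᵥ (Jmat s t *ᵥ (UR *ᵥ c))) = 0 := by
    rw [mulVec_mulVec (M := Jmat s t), mulVec_dotProduct_mulVec_mulVec,
      transpose_mul_mul_eq_zero_of_fromCols_gram_eq_one horth, zero_mulVec, dotProduct_zero]
  obtain ⟨a, b, hab⟩ : ∃ a b, UR *ᵥ c = Sum.elim a b := ⟨_, _, (Sum.elim_comp_inl_inr _).symm⟩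
  rw [hab, Jmat_mulVec_sumElim, sumElim_dotProduct_fromBlocks_zero_mulVec_sumElim,
    mulVec_neg, dotProduct_neg] at hcross
  rw [hab, Sum.elim_comp_inl, Sum.elim_comp_inr, sumElim_dotProduct_fromBlocks_zero_mulVec_sumElim]
  constructor <;> linarith

/-- Energy equipartition for bandlimited signals: if `[U_R, J U_R]` has
`Q`-orthonormal columns with `Q = diag(Q_S, Q_Sc)`, then every `x` in the column
span of `U_R` satisfies `‖x_S‖_{Q_S}² = ‖x_Sc‖_{Q_Sc}² = (1/2) ‖x‖_Q²`. -/
theorem stmt_9 {s t r : ℕ} (QS : Matrix (Fin s) (Fin s) ℝ) (QSc : Matrix (Fin t) (Fin t) ℝ)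
    (hQ : (Matrix.fromBlocks QS 0 0 QSc).PosDef)
    (UR : Matrix (Fin s ⊕ Fin t) (Fin r) ℝ)
    (horth : (Matrix.fromCols UR (Jmat s t * UR))ᵀ * Matrix.fromBlocks QS 0 0 QSc *
        Matrix.fromCols UR (Jmat s t * UR) = 1) :
    ∀ x : Fin s ⊕ Fin t → ℝ, (∃ c : Fin r → ℝ, x = UR *ᵥ c) →
      (x ∘ Sum.inl) ⬝ᵥ (QS *ᵥ (x ∘ Sum.inl)) = (x ∘ Sum.inr) ⬝ᵥ (QSc *ᵥ (x ∘ Sum.inr)) ∧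
      (x ∘ Sum.inl) ⬝ᵥ (QS *ᵥ (x ∘ Sum.inl)) =
        (1 / 2) * (x ⬝ᵥ (Matrix.fromBlocks QS 0 0 QSc *ᵥ x)) :=
  stmt_9_general QS QSc UR horth
end

section
/- GFT of the downsampled–upsampled signal: for any x in the span of U_R (bandlimited with GFT coefficients x̂ vanishing outside indices 1..r), the signal x_du = (1/2)(x + J x) (which equals x on S and 0 on Sc) has (M,Q)-GFT coefficients x̂_du = (1/2)(x̂ + R_N x̂), where R_N is the N×N antidiagonal permutation (reversal) matrix, assuming the last r columns of U equal J U_R R_r and Uᵀ Q U = I. -/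
open Matrix

/-- The `N × N` antidiagonal (reversal) permutation matrix. -/
def Rmat (N : ℕ) : Matrix (Fin N) (Fin N) ℝ :=
  Matrix.of fun i j => if j = i.rev then 1 else 0

lemma Jmat_mulVec_apply {s t : ℕ} (y : Fin s ⊕ Fin t → ℝ) (i : Fin s ⊕ Fin t) :
    (Jmat s t *ᵥ y) i = Sum.elim (fun _ => (1:ℝ)) (fun _ => (-1:ℝ)) i * y i := by
  cases i with
  | inl a =>
    simp [Jmat, mulVec, dotProduct, Fintype.sum_sum_type, one_apply, mul_comm]
  | inr b =>
    simp [Jmat, mulVec, dotProduct, Fintype.sum_sum_type, one_apply, mul_comm]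

lemma Rmat_mulVec_apply {N : ℕ} (v : Fin N → ℝ) (k : Fin N) :
    (Rmat N *ᵥ v) k = v k.rev := by
  simp [Rmat, mulVec, dotProduct]

/-- GFT of the downsampled–upsampled signal: for bandlimited `x = U x̂` with `x̂`
supported on the first `r` coordinates, assuming the last `r` columns of `U` equal
`J U_R R_r` and `Uᵀ Q U = I`, the signal `x_du = (1/2)(x + J x)` equals `x` on `S`
and `0` on `Sᶜ`, and its GFT coefficients are `x̂_du = (1/2)(x̂ + R_N x̂)`. -/
theorem stmt_10 {s t : ℕ} (M : Matrix (Fin s ⊕ Fin t) (Fin s ⊕ Fin t) ℝ)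
    (hM : M.PosSemidef) (hQ : (Qmat M).PosDef)
    (U : Matrix (Fin s ⊕ Fin t) (Fin (s + t)) ℝ)
    (horth : Uᵀ * Qmat M * U = 1)
    (r : ℕ) (hr : r ≤ s + t)
    (hlast : ∀ a : Fin r,
      (fun i => U i (Fin.rev (Fin.castLE hr a))) =
        Jmat s t *ᵥ (fun i => U i (Fin.castLE hr a)))
    (xhat : Fin (s + t) → ℝ) (hsupp : ∀ k : Fin (s + t), r ≤ (k : ℕ) → xhat k = 0) :
    (∀ a : Fin s,
      ((1 / 2 : ℝ) • (U *ᵥ xhat + Jmat s t *ᵥ (U *ᵥ xhat))) (Sum.inl a) =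
        (U *ᵥ xhat) (Sum.inl a)) ∧
    (∀ b : Fin t,
      ((1 / 2 : ℝ) • (U *ᵥ xhat + Jmat s t *ᵥ (U *ᵥ xhat))) (Sum.inr b) = 0) ∧
    (Uᵀ * Qmat M) *ᵥ ((1 / 2 : ℝ) • (U *ᵥ xhat + Jmat s t *ᵥ (U *ᵥ xhat))) =
      (1 / 2 : ℝ) • (xhat + Rmat (s + t) *ᵥ xhat) := by
  set x := U *ᵥ xhat with hx
  have hJ : ∀ (y : Fin s ⊕ Fin t → ℝ) (i),
      (Jmat s t *ᵥ y) i = Sum.elim (fun _ => (1:ℝ)) (fun _ => (-1:ℝ)) i * y i :=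
    Jmat_mulVec_apply
  refine ⟨?_, ?_, ?_⟩
  · intro a
    simp only [Pi.smul_apply, Pi.add_apply, hJ, Sum.elim_inl, one_mul, smul_eq_mul]
    ring
  · intro b
    simp only [Pi.smul_apply, Pi.add_apply, hJ, Sum.elim_inr, neg_one_mul, smul_eq_mul]
    ring
  · have key : Jmat s t *ᵥ x = U *ᵥ (Rmat (s + t) *ᵥ xhat) := by
      funext i
      rw [hJ]
      have h1 : (U *ᵥ (Rmat (s + t) *ᵥ xhat)) i = ∑ k, U i k * xhat k.rev := by
        simp only [mulVec, dotProduct]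
        refine Finset.sum_congr rfl fun k _ => ?_
        rw [show ∑ j, Rmat (s + t) k j * xhat j = xhat k.rev from Rmat_mulVec_apply xhat k]
      rw [h1]
      have h2 : ∑ k, U i k * xhat k.rev = ∑ k : Fin (s + t), U i k.rev * xhat k := by
        refine Fintype.sum_equiv (Fin.revPerm) _ _ (fun k => ?_)
        simp
      rw [h2]
      have hxi : x i = ∑ k, U i k * xhat k := by simp [hx, mulVec, dotProduct]
      rw [hxi, Finset.mul_sum]
      refine Finset.sum_congr rfl (fun k _ => ?_)
      by_cases hk : (k : ℕ) < r
      · have hkeq : Fin.castLE hr ⟨(k : ℕ), hk⟩ = k := by ext; rfl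
        have := congrFun (hlast ⟨(k : ℕ), hk⟩) i
        rw [hkeq] at this
        rw [this, hJ]
        ring
      · rw [hsupp k (le_of_not_gt hk)]
        ring
    have horth' : ∀ v : Fin (s + t) → ℝ, (Uᵀ * Qmat M) *ᵥ (U *ᵥ v) = v := by
      intro v
      rw [mulVec_mulVec, horth, one_mulVec]
    rw [key, mulVec_smul, mulVec_add, horth', horth']
end

section
/- Closed-form bandlimited interpolation (Theorem 2): assume U_SRᵀ Q_S U_SR = (1/2) I_r and that for every bandlimited y = U_R ŷ, ‖y_S‖_{Q_S}² = ‖y_Sc‖_{Q_Sc}². Given samples x_S with x_S in the column span of U_SR, the vector y = 2 U_R U_SRᵀ Q_S x_S is the unique minimizer of ‖y − [x_S; 0]‖_Q² over y ∈ span(U_R) with y_S = x_S; moreover the minimum value equals ‖x_S‖_{Q_S}². -/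
open Matrix

/-- Closed-form bandlimited interpolation: assuming `U_SRᵀ Q_S U_SR = (1/2) I` and
energy equipartition on the bandlimited space, for samples `x_S` in the column span
of `U_SR`, the vector `y₀ = 2 U_R U_SRᵀ Q_S x_S` is the unique minimizer of
`‖y − [x_S; 0]‖_Q²` over bandlimited `y` with `y_S = x_S`, and the minimum value is
`‖x_S‖_{Q_S}²`. -/
theorem stmt_11 {s t r : ℕ} (QS : Matrix (Fin s) (Fin s) ℝ) (QSc : Matrix (Fin t) (Fin t) ℝ)
    (hQ : (Matrix.fromBlocks QS 0 0 QSc).PosDef)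
    (UR : Matrix (Fin s ⊕ Fin t) (Fin r) ℝ)
    (hhalf : (UR.submatrix Sum.inl id)ᵀ * QS * UR.submatrix Sum.inl id = (1 / 2 : ℝ) • 1)
    (henergy : ∀ c : Fin r → ℝ,
      ((UR *ᵥ c) ∘ Sum.inl) ⬝ᵥ (QS *ᵥ ((UR *ᵥ c) ∘ Sum.inl)) =
        ((UR *ᵥ c) ∘ Sum.inr) ⬝ᵥ (QSc *ᵥ ((UR *ᵥ c) ∘ Sum.inr)))
    (xS : Fin s → ℝ) (hxS : ∃ c : Fin r → ℝ, xS = UR.submatrix Sum.inl id *ᵥ c) :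
    let obj : (Fin s ⊕ Fin t → ℝ) → ℝ := fun y =>
      (y - Sum.elim xS 0) ⬝ᵥ (Matrix.fromBlocks QS 0 0 QSc *ᵥ (y - Sum.elim xS 0))
    let y₀ : Fin s ⊕ Fin t → ℝ :=
      (2 : ℝ) • (UR *ᵥ ((UR.submatrix Sum.inl id)ᵀ *ᵥ (QS *ᵥ xS)))
    ((∃ c : Fin r → ℝ, y₀ = UR *ᵥ c) ∧ y₀ ∘ Sum.inl = xS) ∧
    (∀ y : Fin s ⊕ Fin t → ℝ, (∃ c : Fin r → ℝ, y = UR *ᵥ c) → y ∘ Sum.inl = xS →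
      obj y₀ ≤ obj y ∧ (obj y = obj y₀ → y = y₀)) ∧
    obj y₀ = xS ⬝ᵥ (QS *ᵥ xS) := by
  intro obj y₀
  set A := UR.submatrix Sum.inl id with hA
  obtain ⟨cx, hcx⟩ := hxS
  -- restriction lemma
  have hrestr : ∀ c : Fin r → ℝ, (UR *ᵥ c) ∘ Sum.inl = A *ᵥ c := by
    intro c; funext i; simp [hA, mulVec, dotProduct, submatrix]
  -- key: any feasible coefficient vector is determined
  have hkey : ∀ c : Fin r → ℝ, A *ᵥ c = xS →
      (2 : ℝ) • (Aᵀ *ᵥ (QS *ᵥ xS)) = c := by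
    intro c hc
    have : Aᵀ *ᵥ (QS *ᵥ xS) = (Aᵀ * QS * A) *ᵥ c := by
      rw [← hc]; simp [mulVec_mulVec, Matrix.mul_assoc]
    rw [this, hhalf, smul_mulVec, one_mulVec, smul_smul]
    norm_num
  set c₀ : Fin r → ℝ := (2 : ℝ) • (Aᵀ *ᵥ (QS *ᵥ xS)) with hc₀
  have hc₀cx : c₀ = cx := hkey cx hcx.symm
  have hy₀ : y₀ = UR *ᵥ c₀ := by
    show (2 : ℝ) • (UR *ᵥ (Aᵀ *ᵥ (QS *ᵥ xS))) = UR *ᵥ c₀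
    rw [hc₀, mulVec_smul]
  have hy₀inl : y₀ ∘ Sum.inl = xS := by
    rw [hy₀, hrestr, hc₀cx, ← hcx]
  -- any feasible y equals y₀
  have hfeas : ∀ y : Fin s ⊕ Fin t → ℝ, (∃ c, y = UR *ᵥ c) → y ∘ Sum.inl = xS → y = y₀ := by
    rintro y ⟨c, rfl⟩ hyl
    rw [hrestr] at hyl
    rw [hy₀, hkey c hyl]
  refine ⟨⟨⟨c₀, hy₀⟩, hy₀inl⟩, ?_, ?_⟩
  · intro y hy hyl
    rw [hfeas y hy hyl]
    exact ⟨le_rfl, fun _ => rfl⟩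
  · -- value of the objective at y₀
    have hz : y₀ - Sum.elim xS 0 = Sum.elim (0 : Fin s → ℝ) ((UR *ᵥ c₀) ∘ Sum.inr) := by
      funext i
      cases i with
      | inl i =>
        have := congrFun hy₀inl i
        simpa [Pi.sub_apply] using sub_eq_zero_of_eq this
      | inr i => simp [hy₀]
    show (y₀ - Sum.elim xS 0) ⬝ᵥ _ = _
    rw [hz]
    have hval : (Sum.elim (0 : Fin s → ℝ) ((UR *ᵥ c₀) ∘ Sum.inr) : Fin s ⊕ Fin t → ℝ) ⬝ᵥ
        (Matrix.fromBlocks QS 0 0 QSc *ᵥ Sum.elim (0 : Fin s → ℝ) ((UR *ᵥ c₀) ∘ Sum.inr)) =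
        ((UR *ᵥ c₀) ∘ Sum.inr) ⬝ᵥ (QSc *ᵥ ((UR *ᵥ c₀) ∘ Sum.inr)) := by
      rw [Matrix.fromBlocks_mulVec]
      simp [dotProduct, Fintype.sum_sum_type]
    rw [hval, ← henergy c₀, hrestr, hc₀cx, ← hcx]
end
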